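/- Let k, m be positive integers and let f : {0,1}^k → {0,1}^m be any Boolean function. Then there exist a natural number a and a multilinear polynomial H of degree at most 3 in k + m + a variables such that H(x, y, w) ≥ 0 for all x ∈ {0,1}^k, y ∈ {0,1}^m, w ∈ {0,1}^a, and for all x ∈ {0,1}^k and y ∈ {0,1}^m: there exists w ∈ {0,1}^a with H(x, y, w) = 0 if and only if y = f(x). Moreover H(x, y, w) ≥ 1 whenever H(x, y, w) ≠ 0. -/
import Mathlib


/-- Coercion of a Boolean value to the real numbers `0` and `1`. -/
def b2r (b : Bool) : ℝ := if b then 1 else 0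

/-- A function `g : (Fin n → ℝ) → ℝ` is given by a multilinear polynomial of
degree at most `d`: it is a linear combination of monomials `∏ i ∈ S, v i`
over subsets `S` of cardinality at most `d`. -/
def IsMultilinearDeg (d n : ℕ) (g : (Fin n → ℝ) → ℝ) : Prop :=
  ∃ c : Finset (Fin n) → ℝ, (∀ S, d < S.card → c S = 0) ∧
    ∀ v, g v = ∑ S : Finset (Fin n), c S * ∏ i ∈ S, v i

namespace Emb

lemma iml_monomial {d n : ℕ} (c : ℝ) (S : Finset (Fin n)) (hS : S.card ≤ d) :
    IsMultilinearDeg d n (fun v => c * ∏ i ∈ S, v i) := by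
  refine ⟨fun T => if T = S then c else 0, ?_, ?_⟩
  · intro T hT
    simp only []
    rw [if_neg]; rintro rfl; omega
  · intro v
    rw [Finset.sum_eq_single S]
    · simp
    · intro T _ hT; simp [hT]
    · simp

lemma iml_const {d n : ℕ} (c : ℝ) : IsMultilinearDeg d n (fun _ => c) := by
  have := iml_monomial (d := d) (n := n) c ∅ (by simp)
  simpa using this

lemma iml_var {d n : ℕ} (hd : 1 ≤ d) (i : Fin n) :
    IsMultilinearDeg d n (fun v => v i) := by
  have := iml_monomial (d := d) (n := n) 1 {i} (by simpa)
  simpa using this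

lemma iml_pair {d n : ℕ} (hd : 2 ≤ d) {i j : Fin n} (hij : i ≠ j) :
    IsMultilinearDeg d n (fun v => v i * v j) := by
  have := iml_monomial (d := d) (n := n) 1 {i, j} (by rw [Finset.card_pair hij]; exact hd)
  simpa [Finset.prod_pair hij] using this

lemma iml_add {d n : ℕ} {g h : (Fin n → ℝ) → ℝ}
    (hg : IsMultilinearDeg d n g) (hh : IsMultilinearDeg d n h) :
    IsMultilinearDeg d n (fun v => g v + h v) := by
  obtain ⟨c1, hc1, he1⟩ := hg
  obtain ⟨c2, hc2, he2⟩ := hh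
  refine ⟨fun S => c1 S + c2 S, fun S hS => by simp only []; rw [hc1 S hS, hc2 S hS]; ring, fun v => ?_⟩
  simp only [he1, he2, add_mul, Finset.sum_add_distrib]

lemma iml_smul {d n : ℕ} (c : ℝ) {g : (Fin n → ℝ) → ℝ}
    (hg : IsMultilinearDeg d n g) :
    IsMultilinearDeg d n (fun v => c * g v) := by
  obtain ⟨c1, hc1, he1⟩ := hg
  refine ⟨fun S => c * c1 S, fun S hS => by simp only []; rw [hc1 S hS]; ring, fun v => ?_⟩
  simp only [he1, Finset.mul_sum, mul_assoc]

lemma iml_neg {d n : ℕ} {g : (Fin n → ℝ) → ℝ}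
    (hg : IsMultilinearDeg d n g) :
    IsMultilinearDeg d n (fun v => -g v) := by
  simpa using iml_smul (-1) hg

lemma iml_sub {d n : ℕ} {g h : (Fin n → ℝ) → ℝ}
    (hg : IsMultilinearDeg d n g) (hh : IsMultilinearDeg d n h) :
    IsMultilinearDeg d n (fun v => g v - h v) := by
  simpa [sub_eq_add_neg] using iml_add hg (iml_neg hh)

lemma iml_sum {d n : ℕ} {ι : Type*} [DecidableEq ι] (S : Finset ι) (g : ι → (Fin n → ℝ) → ℝ)
    (h : ∀ x ∈ S, IsMultilinearDeg d n (g x)) :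
    IsMultilinearDeg d n (fun v => ∑ x ∈ S, g x v) := by
  induction S using Finset.induction_on with
  | empty => simpa using iml_const (d := d) (n := n) 0
  | @insert a s hx ih =>
      simp only [Finset.sum_insert hx]
      exact iml_add (h a (by simp)) (ih fun x hxs => h x (by simp [hxs]))

end Emb

namespace Emb

def bz (b : Bool) : ℤ := if b then 1 else 0

lemma bz_nonneg (b : Bool) : 0 ≤ bz b := by cases b <;> simp [bz]
lemma bz_le_one (b : Bool) : bz b ≤ 1 := by cases b <;> simp [bz]
lemma bz_mul_self (b : Bool) : bz b * bz b = bz b := by cases b <;> simp [bz]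
lemma b2r_eq_cast (b : Bool) : b2r b = (bz b : ℝ) := by cases b <;> simp [bz, b2r]

variable {k m : ℕ}

/-- Integer version of the 3-local penalty function. -/
def NN (k m : ℕ) (f : (Fin k → Bool) → (Fin m → Bool))
    (x : Fin k → Bool) (y : Fin m → Bool) (g : (Fin k → Bool) → Bool) : ℤ :=
  (m : ℤ) * ((∑ s : Fin k → Bool, ∑ t : Fin k → Bool,
        if s = t then 0 else bz (g s) * bz (g t))
      - (∑ s : Fin k → Bool, bz (g s)) + 1)
  + (∑ s : Fin k → Bool, ∑ i : Fin k,
      if s i then bz (g s) - bz (g s) * bz (x i) else bz (g s) * bz (x i))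
  + ∑ j : Fin m, (bz (y j) + (∑ s : Fin k → Bool, bz (f s j) * bz (g s))
      - 2 * ∑ s : Fin k → Bool, bz (f s j) * (bz (y j) * bz (g s)))

lemma mis_term_nonneg (g : (Fin k → Bool) → Bool) (x : Fin k → Bool)
    (s : Fin k → Bool) (i : Fin k) :
    0 ≤ (if s i then bz (g s) - bz (g s) * bz (x i) else bz (g s) * bz (x i)) := by
  cases hs : s i <;> cases hg : g s <;> cases hx : x i <;> simp [bz]

lemma mis_nonneg (g : (Fin k → Bool) → Bool) (x : Fin k → Bool) :
    0 ≤ ∑ s : Fin k → Bool, ∑ i : Fin k,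
      (if s i then bz (g s) - bz (g s) * bz (x i) else bz (g s) * bz (x i)) :=
  Finset.sum_nonneg fun s _ => Finset.sum_nonneg fun i _ => mis_term_nonneg g x s i

/-- The off-diagonal sum equals `r² - r` where `r` is the number of true ancillas. -/
lemma offdiag_sum (g : (Fin k → Bool) → Bool) :
    (∑ s : Fin k → Bool, ∑ t : Fin k → Bool, if s = t then 0 else bz (g s) * bz (g t))
      = (∑ s : Fin k → Bool, bz (g s)) * (∑ s : Fin k → Bool, bz (g s))
        - (∑ s : Fin k → Bool, bz (g s)) := by
  have h1 : ∀ s : Fin k → Bool,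
      (∑ t : Fin k → Bool, if s = t then 0 else bz (g s) * bz (g t))
        = (∑ t : Fin k → Bool, bz (g s) * bz (g t)) - bz (g s) := by
    intro s
    have : (∑ t : Fin k → Bool, if s = t then 0 else bz (g s) * bz (g t))
        = ∑ t : Fin k → Bool, (bz (g s) * bz (g t) - if s = t then bz (g s) * bz (g t) else 0) := by
      refine Finset.sum_congr rfl fun t _ => ?_
      by_cases h : s = t <;> simp [h]
    rw [this, Finset.sum_sub_distrib, Finset.sum_ite_eq]
    simp [bz_mul_self]
  calc (∑ s : Fin k → Bool, ∑ t : Fin k → Bool, if s = t then 0 else bz (g s) * bz (g t))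
      = ∑ s : Fin k → Bool, ((∑ t : Fin k → Bool, bz (g s) * bz (g t)) - bz (g s)) :=
        Finset.sum_congr rfl fun s _ => h1 s
    _ = _ := by
        rw [Finset.sum_sub_distrib, Finset.sum_mul]
        congr 1
        exact Finset.sum_congr rfl fun s _ => by rw [Finset.mul_sum]

end Emb

namespace Emb

variable {k m : ℕ}

lemma exists_one {S : Finset (Fin k → Bool)} {g : (Fin k → Bool) → Bool}
    (h : 1 ≤ ∑ s ∈ S, bz (g s)) : ∃ s ∈ S, g s = true := by
  by_contra hc
  push_neg at hc
  have h0 : ∑ s ∈ S, bz (g s) = 0 := Finset.sum_eq_zero fun s hs => by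
    have := hc s hs
    simp only [Bool.not_eq_true] at this
    simp [bz, this]
  omega

lemma out_term_rw (f : (Fin k → Bool) → (Fin m → Bool)) (y : Fin m → Bool)
    (g : (Fin k → Bool) → Bool) (j : Fin m) :
    (∑ s : Fin k → Bool, bz (f s j) * (bz (y j) * bz (g s)))
      = bz (y j) * ∑ s : Fin k → Bool, bz (f s j) * bz (g s) := by
  rw [Finset.mul_sum]
  exact Finset.sum_congr rfl fun s _ => by ring

lemma T_nonneg (f : (Fin k → Bool) → (Fin m → Bool)) (g : (Fin k → Bool) → Bool) (j : Fin m) :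
    0 ≤ ∑ s : Fin k → Bool, bz (f s j) * bz (g s) :=
  Finset.sum_nonneg fun s _ => mul_nonneg (bz_nonneg _) (bz_nonneg _)

lemma T_le_r (f : (Fin k → Bool) → (Fin m → Bool)) (g : (Fin k → Bool) → Bool) (j : Fin m) :
    (∑ s : Fin k → Bool, bz (f s j) * bz (g s)) ≤ ∑ s : Fin k → Bool, bz (g s) :=
  Finset.sum_le_sum fun s _ => by
    calc bz (f s j) * bz (g s) ≤ 1 * bz (g s) :=
          mul_le_mul_of_nonneg_right (bz_le_one _) (bz_nonneg _)
      _ = bz (g s) := one_mul _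

/-- Core lemma: the integer energy is nonnegative, and it vanishes only if `y = f x`. -/
lemma NN_key (f : (Fin k → Bool) → (Fin m → Bool)) (hm : 0 < m)
    (x : Fin k → Bool) (y : Fin m → Bool) (g : (Fin k → Bool) → Bool) :
    0 ≤ NN k m f x y g ∧ (NN k m f x y g = 0 → y = f x) := by
  classical
  obtain ⟨r, hr_def⟩ : ∃ r : ℤ, r = ∑ s : Fin k → Bool, bz (g s) := ⟨_, rfl⟩
  obtain ⟨T, hT⟩ : ∃ T : Fin m → ℤ,
      ∀ j, T j = ∑ s : Fin k → Bool, bz (f s j) * bz (g s) := ⟨_, fun _ => rfl⟩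
  obtain ⟨Mis, hMis_def⟩ : ∃ M : ℤ, M = ∑ s : Fin k → Bool, ∑ i : Fin k,
      (if s i then bz (g s) - bz (g s) * bz (x i) else bz (g s) * bz (x i)) := ⟨_, rfl⟩
  obtain ⟨Out, hOut_def⟩ : ∃ O : ℤ,
      O = ∑ j : Fin m, (bz (y j) + T j - 2 * (bz (y j) * T j)) := ⟨_, rfl⟩
  have hNN : NN k m f x y g = (m : ℤ) * ((r * r - r) - r + 1) + Mis + Out := by
    rw [NN, offdiag_sum, hr_def, hMis_def, hOut_def]
    congr 1
    exact Finset.sum_congr rfl fun j _ => by rw [out_term_rw, hT]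
  have hMis0 : 0 ≤ Mis := hMis_def ▸ mis_nonneg g x
  have hT0 : ∀ j, 0 ≤ T j := fun j => (hT j) ▸ T_nonneg f g j
  have hTr : ∀ j, T j ≤ r := fun j => by rw [hT j, hr_def]; exact T_le_r f g j
  have hr0 : 0 ≤ r := hr_def ▸ Finset.sum_nonneg fun s _ => bz_nonneg _
  have h1m : (1:ℤ) ≤ m := by exact_mod_cast hm
  have hout_lb' : (1:ℤ) ≤ r → ∀ j : Fin m, 1 - r ≤ bz (y j) + T j - 2 * (bz (y j) * T j) := by
    intro hr1 j
    have hb0 : bz false = (0:ℤ) := rfl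
    have hb1 : bz true = (1:ℤ) := rfl
    cases hy : y j
    · rw [hb0]; have h1 := hT0 j; linarith
    · rw [hb1]; have := hTr j; linarith
  have hOutlb : (1:ℤ) ≤ r → (m : ℤ) * (1 - r) ≤ Out := by
    intro hr1
    have h := Finset.sum_le_sum (s := (Finset.univ : Finset (Fin m))) (f := fun _ : Fin m => (1:ℤ) - r)
      (g := fun j => bz (y j) + T j - 2 * (bz (y j) * T j))
      (fun j _ => hout_lb' hr1 j)
    have hc : ∑ _j : Fin m, ((1:ℤ) - r) = (m : ℤ) * (1 - r) := by
      rw [Finset.sum_const, Finset.card_univ, Fintype.card_fin, nsmul_eq_mul]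
    rw [hOut_def]
    calc (m : ℤ) * (1 - r) = ∑ _j : Fin m, ((1:ℤ) - r) := hc.symm
      _ ≤ _ := h
  rcases lt_trichotomy r 1 with hr | hr | hr
  · -- r = 0
    have hr00 : r = 0 := le_antisymm (Int.le_of_lt_add_one (by linarith)) hr0
    have hz : ∀ s : Fin k → Bool, bz (g s) = 0 := by
      intro s
      have hsum : ∑ s : Fin k → Bool, bz (g s) = 0 := by rw [← hr_def]; exact hr00
      exact (Finset.sum_eq_zero_iff_of_nonneg (fun s _ => bz_nonneg (g s))).mp hsum s
        (Finset.mem_univ s)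
    have hTz : ∀ j, T j = 0 := fun j => by
      rw [hT j]; exact Finset.sum_eq_zero fun s _ => by rw [hz]; ring
    have hOutnn : 0 ≤ Out := by
      rw [hOut_def]
      exact Finset.sum_nonneg fun j _ => by rw [hTz j]; have := bz_nonneg (y j); linarith
    have e : NN k m f x y g = (m : ℤ) + Mis + Out := by rw [hNN, hr00]; ring
    exact ⟨by rw [e]; linarith, fun h0 => by rw [e] at h0; exfalso; linarith⟩
  · -- r = 1
    by_cases hgx : g x = true
    · -- the correct ancilla is on; all others are off
      have hgx1 : bz (g x) = 1 := by simp [bz, hgx]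
      have hsplit : bz (g x) + ∑ s ∈ Finset.univ.erase x, bz (g s)
          = ∑ s : Fin k → Bool, bz (g s) :=
        Finset.add_sum_erase _ (fun s => bz (g s)) (Finset.mem_univ x)
      rw [← hr_def] at hsplit
      rw [hgx1] at hsplit
      have herase : ∑ s ∈ Finset.univ.erase x, bz (g s) = 0 := by
        have hgs := Finset.sum_nonneg (s := Finset.univ.erase x)
          (fun s _ => bz_nonneg (g s))
        linarith
      have hz : ∀ s : Fin k → Bool, s ≠ x → bz (g s) = 0 := by
        intro s hs
        exact (Finset.sum_eq_zero_iff_of_nonneg (fun s _ => bz_nonneg (g s))).mp herase s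
          (Finset.mem_erase.mpr ⟨hs, Finset.mem_univ s⟩)
      have hTx : ∀ j, T j = bz (f x j) := by
        intro j
        rw [hT j]
        rw [Finset.sum_eq_single x (fun s _ hs => by rw [hz s hs]; ring) (by simp)]
        rw [hgx1, mul_one]
      have hMisz : Mis = 0 := by
        rw [hMis_def]
        refine Finset.sum_eq_zero fun s _ => Finset.sum_eq_zero fun i _ => ?_
        by_cases hs : s = x
        · subst hs
          cases hxi : s i <;> simp [hxi, hgx1, bz]
        · rw [hz s hs]; simp
      have hrw : NN k m f x y g = ∑ j : Fin m, (bz (y j) + bz (f x j)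
          - 2 * (bz (y j) * bz (f x j))) := by
        rw [hNN, hMisz, hr, hOut_def]
        rw [Finset.sum_congr rfl fun j (_ : j ∈ Finset.univ) => by rw [hTx j]]
        ring
      have hterm0 : ∀ j : Fin m, 0 ≤ bz (y j) + bz (f x j) - 2 * (bz (y j) * bz (f x j)) := by
        intro j; cases hy : y j <;> cases hf : f x j <;> simp [hy, hf, bz]
      constructor
      · rw [hrw]; exact Finset.sum_nonneg fun j _ => hterm0 j
      · intro h0
        rw [hrw] at h0
        have hall := (Finset.sum_eq_zero_iff_of_nonneg fun j _ => hterm0 j).mp h0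
        funext j
        have hj := hall j (Finset.mem_univ j)
        cases hy : y j <;> cases hf : f x j <;> rw [hy, hf] at hj <;> simp [bz] at hj <;> rfl
    · -- some wrong ancilla is on
      have hone : 1 ≤ ∑ s : Fin k → Bool, bz (g s) := by rw [← hr_def]; linarith
      obtain ⟨s, _, hs1⟩ := exists_one hone
      have hsx : s ≠ x := by rintro rfl; exact hgx hs1
      obtain ⟨i, hi⟩ := Function.ne_iff.mp hsx
      have hterm1 : (1:ℤ) ≤ (if s i then bz (g s) - bz (g s) * bz (x i)
          else bz (g s) * bz (x i)) := by
        cases hsi : s i <;> cases hxi : x i <;>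
          simp [hsi, hxi, hs1, bz] <;> simp [hsi, hxi] at hi
      have hMis1 : 1 ≤ Mis := by
        have hinner : (1:ℤ) ≤ ∑ i : Fin k,
            (if s i then bz (g s) - bz (g s) * bz (x i) else bz (g s) * bz (x i)) :=
          le_trans hterm1 (Finset.single_le_sum
            (fun i _ => mis_term_nonneg g x s i) (Finset.mem_univ i))
        rw [hMis_def]
        exact le_trans hinner (Finset.single_le_sum
          (fun s' _ => Finset.sum_nonneg fun i' _ => mis_term_nonneg g x s' i')
          (Finset.mem_univ s))
      have hOutnn : 0 ≤ Out := by
        rw [hOut_def]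
        refine Finset.sum_nonneg fun j _ => ?_
        have hTj : T j ≤ 1 := le_trans (hTr j) (le_of_eq hr)
        have hTj0 := hT0 j
        have hb0 : bz false = (0:ℤ) := rfl
        have hb1 : bz true = (1:ℤ) := rfl
        cases hy : y j
        · rw [hb0]; linarith
        · rw [hb1]; linarith
      have e : NN k m f x y g = Mis + Out := by rw [hNN, hr]; ring
      exact ⟨by rw [e]; linarith, fun h0 => by rw [e] at h0; exfalso; linarith⟩
  · -- r ≥ 2
    rcases eq_or_lt_of_le (show (2:ℤ) ≤ r by linarith [Int.add_one_le_iff.mpr hr]) with hr2 | hr3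
    · -- r = 2 : two distinct ancillas on, mismatch penalty at least 1
      have hone : 1 ≤ ∑ s : Fin k → Bool, bz (g s) := by rw [← hr_def]; linarith
      obtain ⟨s, _, hs1⟩ := exists_one hone
      have hbs : bz (g s) = 1 := by simp [bz, hs1]
      have hsplit : bz (g s) + ∑ s' ∈ Finset.univ.erase s, bz (g s')
          = ∑ s' : Fin k → Bool, bz (g s') :=
        Finset.add_sum_erase _ (fun s' => bz (g s')) (Finset.mem_univ s)
      rw [← hr_def] at hsplit
      rw [hbs] at hsplit
      have herase : 1 ≤ ∑ s' ∈ Finset.univ.erase s, bz (g s') := by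
        linarith [Int.add_one_le_iff.mpr hr]
      obtain ⟨t, htmem, ht1⟩ := exists_one herase
      have hbt : bz (g t) = 1 := by simp [bz, ht1]
      have hts : t ≠ s := (Finset.mem_erase.mp htmem).1
      obtain ⟨i, hi⟩ := Function.ne_iff.mp hts
      have hkey : (1:ℤ) ≤ (if s i then bz (g s) - bz (g s) * bz (x i)
            else bz (g s) * bz (x i))
          + (if t i then bz (g t) - bz (g t) * bz (x i) else bz (g t) * bz (x i)) := by
        cases hsi : s i <;> cases hti : t i <;> cases hxi : x i <;>
          simp [hsi, hti, hxi, hbs, hbt, hs1, ht1, bz] <;> simp [hsi, hti] at hi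
      have hMis1 : 1 ≤ Mis := by
        have houter : ∀ s' : Fin k → Bool, 0 ≤ ∑ i' : Fin k,
            (if s' i' then bz (g s') - bz (g s') * bz (x i') else bz (g s') * bz (x i')) :=
          fun s' => Finset.sum_nonneg fun i' _ => mis_term_nonneg g x s' i'
        have hsub : (∑ s' ∈ ({s, t} : Finset (Fin k → Bool)), ∑ i' : Fin k,
            (if s' i' then bz (g s') - bz (g s') * bz (x i') else bz (g s') * bz (x i')))
            ≤ Mis := by
          rw [hMis_def]
          exact Finset.sum_le_sum_of_subset_of_nonneg (Finset.subset_univ _)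
            (fun s' _ _ => houter s')
        rw [Finset.sum_pair (Ne.symm hts)] at hsub
        have h2 := Finset.single_le_sum (fun i' _ => mis_term_nonneg g x s i') (Finset.mem_univ i)
        have h3 := Finset.single_le_sum (fun i' _ => mis_term_nonneg g x t i') (Finset.mem_univ i)
        linarith
      have e : NN k m f x y g = (m:ℤ) + Mis + Out := by rw [hNN, ← hr2]; ring
      have hOutm : -(m:ℤ) ≤ Out := by
        have h := hOutlb (by linarith)
        rw [← hr2] at h
        linarith
      exact ⟨by rw [e]; linarith, fun h0 => by rw [e] at h0; exfalso; linarith⟩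
    · -- r ≥ 3
      have e1 : (m:ℤ) * ((r * r - r) - r + 1) - m * (r - 1) = m * ((r-1) * (r-2)) := by ring
      have e2 : (2:ℤ) ≤ (r-1) * (r-2) := by nlinarith
      have e3 : (2:ℤ) ≤ (m:ℤ) * ((r-1) * (r-2)) := by nlinarith
      have hOutm : -((m:ℤ) * (r - 1)) ≤ Out := by
        have h := hOutlb (by linarith)
        linarith
      constructor
      · rw [hNN]; linarith
      · intro h0; exfalso; rw [hNN] at h0; linarith

end Emb

namespace Emb

variable {k m : ℕ}

lemma bz_decide (p : Prop) [Decidable p] : bz (decide p) = if p then 1 else 0 := by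
  by_cases h : p <;> simp [bz, h]

/-- At the correct witness (one-hot indicator of `x`, output `f x`) the energy vanishes. -/
lemma NN_self (f : (Fin k → Bool) → (Fin m → Bool)) (x : Fin k → Bool) :
    NN k m f x (f x) (fun s => decide (s = x)) = 0 := by
  classical
  have hz : ∀ s : Fin k → Bool, bz (decide (s = x)) = if s = x then 1 else 0 :=
    fun s => bz_decide _
  rw [NN]
  have h1 : (∑ s : Fin k → Bool, ∑ t : Fin k → Bool,
      if s = t then 0 else bz (decide (s = x)) * bz (decide (t = x))) = 0 := by
    refine Finset.sum_eq_zero fun s _ => Finset.sum_eq_zero fun t _ => ?_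
    by_cases hst : s = t
    · simp [hst]
    · rw [if_neg hst, hz, hz]
      by_cases hs : s = x
      · have ht : ¬ t = x := fun h => hst (hs.trans h.symm)
        rw [if_neg ht]; ring
      · rw [if_neg hs]; ring
  have h2 : (∑ s : Fin k → Bool, bz (decide (s = x))) = 1 := by
    rw [Finset.sum_congr rfl fun s (_ : s ∈ Finset.univ) => hz s]
    rw [Finset.sum_ite_eq' Finset.univ x (fun _ => (1:ℤ))]
    simp
  have h3 : (∑ s : Fin k → Bool, ∑ i : Fin k,
      if s i then bz (decide (s = x)) - bz (decide (s = x)) * bz (x i)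
      else bz (decide (s = x)) * bz (x i)) = 0 := by
    refine Finset.sum_eq_zero fun s _ => Finset.sum_eq_zero fun i _ => ?_
    by_cases hs : s = x
    · subst hs
      rw [hz, if_pos rfl]
      cases hxi : s i <;> simp [hxi, bz]
    · rw [hz, if_neg hs]
      simp
  have h4 : ∀ j : Fin m, (∑ s : Fin k → Bool, bz (f s j) * bz (decide (s = x)))
      = bz (f x j) := by
    intro j
    have : ∀ s : Fin k → Bool, bz (f s j) * bz (decide (s = x))
        = if s = x then bz (f s j) else 0 := by
      intro s; rw [hz]; by_cases hs : s = x <;> simp [hs]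
    rw [Finset.sum_congr rfl fun s (_ : s ∈ Finset.univ) => this s]
    rw [Finset.sum_ite_eq' Finset.univ x (fun s => bz (f s j))]
    simp
  have h5 : ∀ j : Fin m, (∑ s : Fin k → Bool,
      bz (f s j) * (bz (f x j) * bz (decide (s = x)))) = bz (f x j) * bz (f x j) := by
    intro j
    have : ∀ s : Fin k → Bool, bz (f s j) * (bz (f x j) * bz (decide (s = x)))
        = if s = x then bz (f x j) * bz (f s j) else 0 := by
      intro s; rw [hz]; by_cases hs : s = x <;> simp [hs] <;> ring
    rw [Finset.sum_congr rfl fun s (_ : s ∈ Finset.univ) => this s]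
    rw [Finset.sum_ite_eq' Finset.univ x (fun s => bz (f x j) * bz (f s j))]
    simp
  rw [h1, h2, h3]
  have h6 : (∑ j : Fin m, (bz (f x j) + (∑ s : Fin k → Bool, bz (f s j) * bz (decide (s = x)))
      - 2 * ∑ s : Fin k → Bool, bz (f s j) * (bz (f x j) * bz (decide (s = x))))) = 0 := by
    refine Finset.sum_eq_zero fun j _ => ?_
    rw [h4 j, h5 j]
    cases hf : f x j <;> simp [bz]
  rw [h6]
  ring

end Emb

open Emb

/-- Theorem 1 of the paper (3-local circuit embedding): every switching function
`f : {0,1}^k → {0,1}^m` can be embedded, using ancilla (mediator) bits `w`, into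
the zero-energy ground space of a nonnegative 3-local (degree at most 3) pseudo-Boolean
function with spectral gap at least `1`. -/
theorem switching_function_three_local_embedding
    (k m : ℕ) (hk : 0 < k) (hm : 0 < m)
    (f : (Fin k → Bool) → (Fin m → Bool)) :
    ∃ (a : ℕ) (H : (Fin (k + m + a) → ℝ) → ℝ),
      IsMultilinearDeg 3 (k + m + a) H ∧
      (∀ (x : Fin k → Bool) (y : Fin m → Bool) (w : Fin a → Bool),
        0 ≤ H (Fin.append (Fin.append (fun i => b2r (x i)) (fun j => b2r (y j)))
              (fun l => b2r (w l)))) ∧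
      (∀ (x : Fin k → Bool) (y : Fin m → Bool),
        (∃ w : Fin a → Bool,
          H (Fin.append (Fin.append (fun i => b2r (x i)) (fun j => b2r (y j)))
              (fun l => b2r (w l))) = 0) ↔ y = f x) ∧
      (∀ (x : Fin k → Bool) (y : Fin m → Bool) (w : Fin a → Bool),
        H (Fin.append (Fin.append (fun i => b2r (x i)) (fun j => b2r (y j)))
            (fun l => b2r (w l))) ≠ 0 →
        1 ≤ H (Fin.append (Fin.append (fun i => b2r (x i)) (fun j => b2r (y j)))
              (fun l => b2r (w l)))) := by
  classical
  set a : ℕ := Fintype.card (Fin k → Bool) with ha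
  set e : (Fin k → Bool) ≃ Fin a := Fintype.equivFin (Fin k → Bool) with he
  set XI : Fin k → Fin (k + m + a) := fun i => Fin.castAdd a (Fin.castAdd m i) with hXI
  set YI : Fin m → Fin (k + m + a) := fun j => Fin.castAdd a (Fin.natAdd k j) with hYI
  set ZI : (Fin k → Bool) → Fin (k + m + a) := fun s => Fin.natAdd (k + m) (e s) with hZI
  have hZZ : ∀ s t : Fin k → Bool, s ≠ t → ZI s ≠ ZI t := by
    intro s t hst h
    apply hst
    apply e.injective
    have hv := congrArg Fin.val h
    simp only [hZI, Fin.natAdd] at hv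
    exact Fin.ext (by omega)
  have hZX : ∀ (s : Fin k → Bool) (i : Fin k), ZI s ≠ XI i := by
    intro s i h
    have hv := congrArg Fin.val h
    simp only [hZI, hXI, Fin.natAdd, Fin.castAdd, Fin.castLE] at hv
    have := (Fin.castAdd m i).isLt
    omega
  have hZY : ∀ (s : Fin k → Bool) (j : Fin m), ZI s ≠ YI j := by
    intro s j h
    have hv := congrArg Fin.val h
    simp only [hZI, hYI, Fin.natAdd, Fin.castAdd, Fin.castLE] at hv
    have := (Fin.natAdd k j).isLt
    omega
  refine ⟨a, fun v =>
      (m : ℝ) * ((∑ s : Fin k → Bool, ∑ t : Fin k → Bool,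
          if s = t then 0 else v (ZI s) * v (ZI t))
        - (∑ s : Fin k → Bool, v (ZI s)) + 1)
      + (∑ s : Fin k → Bool, ∑ i : Fin k,
          if s i then v (ZI s) - v (ZI s) * v (XI i) else v (ZI s) * v (XI i))
      + ∑ j : Fin m, (v (YI j) + (∑ s : Fin k → Bool, b2r (f s j) * v (ZI s))
          - 2 * ∑ s : Fin k → Bool, b2r (f s j) * (v (YI j) * v (ZI s))), ?_, ?_, ?_, ?_⟩
  case _ => -- multilinearity
    refine iml_add (iml_add ?_ ?_) ?_
    · refine iml_smul _ (iml_add (iml_sub ?_ ?_) (iml_const 1))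
      · refine iml_sum _ _ fun s _ => iml_sum _ _ fun t _ => ?_
        by_cases hst : s = t
        · simpa [hst] using iml_const (d := 3) (n := k + m + a) 0
        · simpa [hst] using iml_pair (by norm_num) (hZZ s t hst)
      · exact iml_sum _ _ fun s _ => iml_var (by norm_num) _
    · refine iml_sum _ _ fun s _ => iml_sum _ _ fun i _ => ?_
      by_cases hsi : s i
      · simpa [hsi] using iml_sub (iml_var (d := 3) (by norm_num) (ZI s))
          (iml_pair (by norm_num) (hZX s i))
      · simpa [hsi] using iml_pair (d := 3) (by norm_num) (hZX s i)
    · refine iml_sum _ _ fun j _ => iml_sub (iml_add (iml_var (by norm_num) _) ?_)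
        (iml_smul 2 ?_)
      · exact iml_sum _ _ fun s _ => iml_smul _ (iml_var (by norm_num) _)
      · exact iml_sum _ _ fun s _ => iml_smul _
          ((iml_pair (by norm_num) (Ne.symm (hZY s j))))
  all_goals {
    have hev : ∀ (x : Fin k → Bool) (y : Fin m → Bool) (w : Fin a → Bool),
        (fun v =>
          (m : ℝ) * ((∑ s : Fin k → Bool, ∑ t : Fin k → Bool,
              if s = t then 0 else v (ZI s) * v (ZI t))
            - (∑ s : Fin k → Bool, v (ZI s)) + 1)
          + (∑ s : Fin k → Bool, ∑ i : Fin k,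
              if s i then v (ZI s) - v (ZI s) * v (XI i) else v (ZI s) * v (XI i))
          + ∑ j : Fin m, (v (YI j) + (∑ s : Fin k → Bool, b2r (f s j) * v (ZI s))
              - 2 * ∑ s : Fin k → Bool, b2r (f s j) * (v (YI j) * v (ZI s))))
          (Fin.append (Fin.append (fun i => b2r (x i)) (fun j => b2r (y j)))
            (fun l => b2r (w l)))
        = ((NN k m f x y (fun s => w (e s)) : ℤ) : ℝ) := by
      intro x y w
      simp only [hXI, hYI, hZI, Fin.append_left, Fin.append_right, NN, b2r_eq_cast]
      push_cast [apply_ite (fun z : ℤ => (z : ℝ))]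
      ring
    first
    | -- nonnegativity
      (intro x y w
       rw [hev x y w]
       exact_mod_cast (NN_key f hm x y (fun s => w (e s))).1)
    | -- zero iff correct output
      (intro x y
       constructor
       · rintro ⟨w, hw⟩
         rw [hev x y w] at hw
         exact (NN_key f hm x y (fun s => w (e s))).2 (by exact_mod_cast hw)
       · rintro rfl
         refine ⟨fun l => decide (e.symm l = x), ?_⟩
         rw [hev]
         have hg : (fun s => decide (e.symm (e s) = x)) = fun s => decide (s = x) := by
           funext s; simp
         rw [hg, NN_self f x]
         norm_num)
    | -- gap
      (intro x y w hne
       rw [hev x y w] at hne ⊢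
       have h0 := (NN_key f hm x y (fun s => w (e s))).1
       have hne' : NN k m f x y (fun s => w (e s)) ≠ 0 := by exact_mod_cast hne
       have : 1 ≤ NN k m f x y (fun s => w (e s)) := by omega
       exact_mod_cast this)
  }
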